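/- GOSPA additivity for far-away components: if X = X₁ ∪ X₂, Y = Y₁ ∪ Y₂ with X₁,Y₁ disjoint from X₂,Y₂, and d(x,y) ≥ c for every x ∈ X₁ ∪ Y₁ and y ∈ X₂ ∪ Y₂, then d²(X,Y) = d²(X₁,Y₁) + d²(X₂,Y₂), where d² denotes the squared GOSPA metric with p=2, α=2. -/
import Mathlib


open Finset

/-- An assignment set between index sets `Fin m` and `Fin n`: each index is used at most once. -/
def validAssign (m n : ℕ) (γ : Finset (Fin m × Fin n)) : Prop :=
  (∀ p ∈ γ, ∀ q ∈ γ, p.1 = q.1 → p = q) ∧ (∀ p ∈ γ, ∀ q ∈ γ, p.2 = q.2 → p = q)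

/-- GOSPA cost (p = 2, α = 2) of an assignment set. -/
noncomputable def gospaCost {E : Type*} [MetricSpace E] {m n : ℕ} (c : ℝ)
    (x : Fin m → E) (y : Fin n → E) (γ : Finset (Fin m × Fin n)) : ℝ :=
  ∑ p ∈ γ, dist (x p.1) (y p.2) ^ 2 + c ^ 2 / 2 * ((m : ℝ) + (n : ℝ) - 2 * (γ.card : ℝ))

open scoped Classical in
/-- Squared GOSPA distance (p = 2, α = 2) between finite sets represented by indexed families. -/
noncomputable def gospa2 {E : Type*} [MetricSpace E] {m n : ℕ} (c : ℝ)
    (x : Fin m → E) (y : Fin n → E) : ℝ :=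
  ((Finset.univ : Finset (Fin m × Fin n)).powerset.filter (fun γ => validAssign m n γ)).inf'
    ⟨∅, by simp [validAssign]⟩ (gospaCost c x y)

section Aux

variable {E : Type*} [MetricSpace E] {m₁ m₂ n₁ n₂ : ℕ}

/-- the embedding of a pair on the first blocks -/
def ePair₁ (m₂ n₂ : ℕ) (q : Fin m₁ × Fin n₁) : Fin (m₁ + m₂) × Fin (n₁ + n₂) :=
  (Fin.castAdd m₂ q.1, Fin.castAdd n₂ q.2)

/-- the embedding of a pair on the second blocks -/
def ePair₂ (m₁ n₁ : ℕ) (q : Fin m₂ × Fin n₂) : Fin (m₁ + m₂) × Fin (n₁ + n₂) :=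
  (Fin.natAdd m₁ q.1, Fin.natAdd n₁ q.2)

lemma ePair₁_inj : Function.Injective (ePair₁ (m₁ := m₁) (n₁ := n₁) m₂ n₂) := by
  intro a b h
  simp only [ePair₁, Prod.ext_iff, Fin.ext_iff, Fin.coe_castAdd] at h ⊢
  exact h

lemma ePair₂_inj : Function.Injective (ePair₂ (m₂ := m₂) (n₂ := n₂) m₁ n₁) := by
  intro a b h
  simp only [ePair₂, Prod.ext_iff, Fin.ext_iff, Fin.coe_natAdd] at h ⊢
  omega

lemma gospa2_le {m n : ℕ} (c : ℝ) (x : Fin m → E) (y : Fin n → E)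
    (γ : Finset (Fin m × Fin n)) (hγ : validAssign m n γ) :
    gospa2 c x y ≤ gospaCost c x y γ := by
  classical
  apply Finset.inf'_le
  simp [validAssign] at hγ ⊢
  exact hγ

lemma gospa2_exists {m n : ℕ} (c : ℝ) (x : Fin m → E) (y : Fin n → E) :
    ∃ γ, validAssign m n γ ∧ gospa2 c x y = gospaCost c x y γ := by
  classical
  obtain ⟨γ, hmem, hval⟩ := Finset.exists_mem_eq_inf'
    (f := gospaCost c x y)
    (H := (⟨∅, by simp [validAssign]⟩ : ((Finset.univ : Finset (Fin m × Fin n)).powerset.filter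
      (fun γ => validAssign m n γ)).Nonempty))
  simp only [Finset.mem_filter, Finset.mem_powerset] at hmem
  exact ⟨γ, hmem.2, hval⟩

lemma combine_cost (c : ℝ) (x₁ : Fin m₁ → E) (x₂ : Fin m₂ → E) (y₁ : Fin n₁ → E)
    (y₂ : Fin n₂ → E) (γ₁ : Finset (Fin m₁ × Fin n₁)) (γ₂ : Finset (Fin m₂ × Fin n₂))
    (h₁ : validAssign m₁ n₁ γ₁) (h₂ : validAssign m₂ n₂ γ₂) :
    ∃ γ : Finset (Fin (m₁ + m₂) × Fin (n₁ + n₂)), validAssign (m₁ + m₂) (n₁ + n₂) γ ∧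
      gospaCost c (Fin.append x₁ x₂) (Fin.append y₁ y₂) γ =
        gospaCost c x₁ y₁ γ₁ + gospaCost c x₂ y₂ γ₂ := by
  classical
  refine ⟨γ₁.image (ePair₁ m₂ n₂) ∪ γ₂.image (ePair₂ m₁ n₁), ?_, ?_⟩
  · have hmem : ∀ p ∈ γ₁.image (ePair₁ m₂ n₂) ∪ γ₂.image (ePair₂ m₁ n₁),
        (∃ q ∈ γ₁, ePair₁ m₂ n₂ q = p) ∨ (∃ q ∈ γ₂, ePair₂ m₁ n₁ q = p) := by
      intro p hp
      simp only [Finset.mem_union, Finset.mem_image] at hp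
      exact hp
    constructor
    · intro p hp q hq hpq
      rcases hmem p hp with ⟨a, ha, rfl⟩ | ⟨a, ha, rfl⟩ <;>
        rcases hmem q hq with ⟨b, hb, rfl⟩ | ⟨b, hb, rfl⟩
      · have hab : a.1 = b.1 := by
          simpa [ePair₁, Fin.ext_iff] using congrArg Fin.val hpq
        exact congrArg _ (h₁.1 a ha b hb hab)
      · exfalso
        have h1 : ((ePair₁ m₂ n₂ a).1 : ℕ) < m₁ := a.1.2
        have h2 : m₁ ≤ ((ePair₂ m₁ n₁ b).1 : ℕ) := Nat.le_add_right _ _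
        rw [hpq] at h1; omega
      · exfalso
        have h1 : ((ePair₁ m₂ n₂ b).1 : ℕ) < m₁ := b.1.2
        have h2 : m₁ ≤ ((ePair₂ m₁ n₁ a).1 : ℕ) := Nat.le_add_right _ _
        rw [hpq] at h2; omega
      · have : a.1 = b.1 := by
          simpa [ePair₂, Fin.ext_iff] using congrArg Fin.val hpq
        exact congrArg _ (h₂.1 a ha b hb this)
    · intro p hp q hq hpq
      rcases hmem p hp with ⟨a, ha, rfl⟩ | ⟨a, ha, rfl⟩ <;>
        rcases hmem q hq with ⟨b, hb, rfl⟩ | ⟨b, hb, rfl⟩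
      · have : a.2 = b.2 := by
          simpa [ePair₁, Fin.ext_iff] using congrArg Fin.val hpq
        exact congrArg _ (h₁.2 a ha b hb this)
      · exfalso
        have h1 : ((ePair₁ m₂ n₂ a).2 : ℕ) < n₁ := a.2.2
        have h2 : n₁ ≤ ((ePair₂ m₁ n₁ b).2 : ℕ) := Nat.le_add_right _ _
        rw [hpq] at h1; omega
      · exfalso
        have h1 : ((ePair₁ m₂ n₂ b).2 : ℕ) < n₁ := b.2.2
        have h2 : n₁ ≤ ((ePair₂ m₁ n₁ a).2 : ℕ) := Nat.le_add_right _ _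
        rw [hpq] at h2; omega
      · have : a.2 = b.2 := by
          simpa [ePair₂, Fin.ext_iff] using congrArg Fin.val hpq
        exact congrArg _ (h₂.2 a ha b hb this)
  · have hdisj : Disjoint (γ₁.image (ePair₁ m₂ n₂)) (γ₂.image (ePair₂ m₁ n₁)) := by
      rw [Finset.disjoint_left]
      rintro p hp hq
      simp only [Finset.mem_image] at hp hq
      obtain ⟨a, _, rfl⟩ := hp
      obtain ⟨b, _, hb⟩ := hq
      have h1 : ((ePair₁ m₂ n₂ a).1 : ℕ) < m₁ := a.1.2
      have h2 : m₁ ≤ ((ePair₂ m₁ n₁ b).1 : ℕ) := Nat.le_add_right _ _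
      rw [hb] at h2; omega
    unfold gospaCost
    rw [Finset.sum_union hdisj, Finset.card_union_of_disjoint hdisj,
      Finset.sum_image (fun a _ b _ h => ePair₁_inj h),
      Finset.sum_image (fun a _ b _ h => ePair₂_inj h),
      Finset.card_image_of_injective _ ePair₁_inj,
      Finset.card_image_of_injective _ ePair₂_inj]
    have e1 : ∀ q : Fin m₁ × Fin n₁,
        dist (Fin.append x₁ x₂ (ePair₁ m₂ n₂ q).1) (Fin.append y₁ y₂ (ePair₁ m₂ n₂ q).2)
          = dist (x₁ q.1) (y₁ q.2) := by
      intro q; simp [ePair₁, Fin.append_left]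
    have e2 : ∀ q : Fin m₂ × Fin n₂,
        dist (Fin.append x₁ x₂ (ePair₂ m₁ n₁ q).1) (Fin.append y₁ y₂ (ePair₂ m₁ n₁ q).2)
          = dist (x₂ q.1) (y₂ q.2) := by
      intro q; simp [ePair₂, Fin.append_right]
    simp only [e1, e2]
    push_cast
    ring

lemma dist_ge_cross (c : ℝ) (x₁ : Fin m₁ → E) (x₂ : Fin m₂ → E) (y₁ : Fin n₁ → E)
    (y₂ : Fin n₂ → E)
    (hxx : ∀ i j, c ≤ dist (x₁ i) (x₂ j))
    (hxy : ∀ i j, c ≤ dist (x₁ i) (y₂ j))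
    (hyx : ∀ i j, c ≤ dist (y₁ i) (x₂ j))
    (hyy : ∀ i j, c ≤ dist (y₁ i) (y₂ j))
    (i : Fin (m₁ + m₂)) (j : Fin (n₁ + n₂))
    (h : ((i : ℕ) < m₁ ∧ n₁ ≤ (j : ℕ)) ∨ (m₁ ≤ (i : ℕ) ∧ (j : ℕ) < n₁)) :
    c ≤ dist (Fin.append x₁ x₂ i) (Fin.append y₁ y₂ j) := by
  rcases h with ⟨hi, hj⟩ | ⟨hi, hj⟩
  · have hi' : i = Fin.castAdd m₂ ⟨(i : ℕ), hi⟩ := by simp [Fin.ext_iff]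
    have hj' : j = Fin.natAdd n₁ ⟨(j : ℕ) - n₁, by omega⟩ := by
      simp [Fin.ext_iff]; omega
    rw [hi', hj', Fin.append_left, Fin.append_right]
    exact hxy _ _
  · have hi' : i = Fin.natAdd m₁ ⟨(i : ℕ) - m₁, by omega⟩ := by
      simp [Fin.ext_iff]; omega
    have hj' : j = Fin.castAdd n₂ ⟨(j : ℕ), hj⟩ := by simp [Fin.ext_iff]
    rw [hi', hj', Fin.append_right, Fin.append_left, dist_comm]
    exact hyx _ _

lemma split_cost (c : ℝ) (hc : 0 < c) (x₁ : Fin m₁ → E) (x₂ : Fin m₂ → E) (y₁ : Fin n₁ → E)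
    (y₂ : Fin n₂ → E)
    (hxx : ∀ i j, c ≤ dist (x₁ i) (x₂ j))
    (hxy : ∀ i j, c ≤ dist (x₁ i) (y₂ j))
    (hyx : ∀ i j, c ≤ dist (y₁ i) (x₂ j))
    (hyy : ∀ i j, c ≤ dist (y₁ i) (y₂ j))
    (γ : Finset (Fin (m₁ + m₂) × Fin (n₁ + n₂))) (hγ : validAssign (m₁ + m₂) (n₁ + n₂) γ) :
    ∃ γ₁ γ₂, validAssign m₁ n₁ γ₁ ∧ validAssign m₂ n₂ γ₂ ∧
      gospaCost c x₁ y₁ γ₁ + gospaCost c x₂ y₂ γ₂ ≤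
        gospaCost c (Fin.append x₁ x₂) (Fin.append y₁ y₂) γ := by
  classical
  set γ₁ : Finset (Fin m₁ × Fin n₁) := Finset.univ.filter (fun q => ePair₁ m₂ n₂ q ∈ γ) with hγ₁
  set γ₂ : Finset (Fin m₂ × Fin n₂) := Finset.univ.filter (fun q => ePair₂ m₁ n₁ q ∈ γ) with hγ₂
  have hmem₁ : ∀ q, q ∈ γ₁ ↔ ePair₁ m₂ n₂ q ∈ γ := by
    intro q; simp [hγ₁]
  have hmem₂ : ∀ q, q ∈ γ₂ ↔ ePair₂ m₁ n₁ q ∈ γ := by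
    intro q; simp [hγ₂]
  refine ⟨γ₁, γ₂, ⟨?_, ?_⟩, ⟨?_, ?_⟩, ?_⟩
  · intro p hp q hq h
    exact ePair₁_inj (hγ.1 _ ((hmem₁ p).1 hp) _ ((hmem₁ q).1 hq)
      (by simp [ePair₁, Fin.ext_iff, h]))
  · intro p hp q hq h
    exact ePair₁_inj (hγ.2 _ ((hmem₁ p).1 hp) _ ((hmem₁ q).1 hq)
      (by simp [ePair₁, Fin.ext_iff, h]))
  · intro p hp q hq h
    exact ePair₂_inj (hγ.1 _ ((hmem₂ p).1 hp) _ ((hmem₂ q).1 hq)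
      (by simp [ePair₂, Fin.ext_iff, h]))
  · intro p hp q hq h
    exact ePair₂_inj (hγ.2 _ ((hmem₂ p).1 hp) _ ((hmem₂ q).1 hq)
      (by simp [ePair₂, Fin.ext_iff, h]))
  · -- split γ into three parts
    set P : Fin (m₁ + m₂) × Fin (n₁ + n₂) → Prop :=
      fun p => (p.1 : ℕ) < m₁ ∧ (p.2 : ℕ) < n₁ with hP
    set Q : Fin (m₁ + m₂) × Fin (n₁ + n₂) → Prop :=
      fun p => m₁ ≤ (p.1 : ℕ) ∧ n₁ ≤ (p.2 : ℕ) with hQ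
    have himA : γ₁.image (ePair₁ m₂ n₂) = γ.filter P := by
      ext p
      simp only [Finset.mem_image, Finset.mem_filter, hP]
      constructor
      · rintro ⟨q, hq, rfl⟩
        exact ⟨(hmem₁ q).1 hq, q.1.2, q.2.2⟩
      · rintro ⟨hp, h1, h2⟩
        have hq : ePair₁ m₂ n₂ (⟨(p.1 : ℕ), h1⟩, ⟨(p.2 : ℕ), h2⟩) = p := by
          simp [ePair₁, Prod.ext_iff, Fin.ext_iff]
        refine ⟨_, (hmem₁ _).2 ?_, hq⟩
        rw [hq]; exact hp
    have himB : γ₂.image (ePair₂ m₁ n₁) = γ.filter Q := by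
      ext p
      simp only [Finset.mem_image, Finset.mem_filter, hQ]
      constructor
      · rintro ⟨q, hq, rfl⟩
        exact ⟨(hmem₂ q).1 hq, Nat.le_add_right _ _, Nat.le_add_right _ _⟩
      · rintro ⟨hp, h1, h2⟩
        have hq : ePair₂ m₁ n₁ (⟨(p.1 : ℕ) - m₁, by omega⟩, ⟨(p.2 : ℕ) - n₁, by omega⟩) = p := by
          simp only [ePair₂, Prod.ext_iff, Fin.ext_iff, Fin.coe_natAdd]
          omega
        refine ⟨_, (hmem₂ _).2 ?_, hq⟩
        rw [hq]; exact hp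
    set C : Finset (Fin (m₁ + m₂) × Fin (n₁ + n₂)) :=
      γ.filter (fun p => ¬ P p ∧ ¬ Q p) with hC
    have hQnotP : ∀ p, Q p → ¬ P p := by
      intro p hq hp; rw [hP] at hp; rw [hQ] at hq; omega
    -- sum decomposition
    have hsum : ∀ f : Fin (m₁ + m₂) × Fin (n₁ + n₂) → ℝ,
        ∑ p ∈ γ, f p = ∑ p ∈ γ.filter P, f p + ∑ p ∈ γ.filter Q, f p + ∑ p ∈ C, f p := by
      intro f
      rw [← Finset.sum_filter_add_sum_filter_not γ P f]
      have : γ.filter (fun p => ¬ P p) = γ.filter Q ∪ C := by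
        ext p
        simp only [Finset.mem_filter, Finset.mem_union, hC]
        constructor
        · rintro ⟨hp, hnp⟩
          by_cases hq : Q p
          · exact Or.inl ⟨hp, hq⟩
          · exact Or.inr ⟨hp, hnp, hq⟩
        · rintro (⟨hp, hq⟩ | ⟨hp, hnp, _⟩)
          · exact ⟨hp, hQnotP p hq⟩
          · exact ⟨hp, hnp⟩
      rw [this, Finset.sum_union]
      · ring
      · rw [Finset.disjoint_left]
        rintro p hp hq
        simp only [Finset.mem_filter, hC] at hp hq
        exact hq.2.2 hp.2
    have hcard : (γ.card : ℝ) = ((γ.filter P).card : ℝ) + ((γ.filter Q).card : ℝ)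
        + (C.card : ℝ) := by
      have := hsum (fun _ => (1 : ℝ))
      simpa [Finset.sum_const, mul_comm] using this
    -- sums over filtered parts equal sums over γ₁, γ₂
    have hsumA : ∑ p ∈ γ.filter P,
        dist (Fin.append x₁ x₂ p.1) (Fin.append y₁ y₂ p.2) ^ 2
        = ∑ q ∈ γ₁, dist (x₁ q.1) (y₁ q.2) ^ 2 := by
      rw [← himA, Finset.sum_image (fun a _ b _ h => ePair₁_inj h)]
      apply Finset.sum_congr rfl
      intro q _
      simp [ePair₁, Fin.append_left]
    have hsumB : ∑ p ∈ γ.filter Q,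
        dist (Fin.append x₁ x₂ p.1) (Fin.append y₁ y₂ p.2) ^ 2
        = ∑ q ∈ γ₂, dist (x₂ q.1) (y₂ q.2) ^ 2 := by
      rw [← himB, Finset.sum_image (fun a _ b _ h => ePair₂_inj h)]
      apply Finset.sum_congr rfl
      intro q _
      simp [ePair₂, Fin.append_right]
    have hcardA : (γ.filter P).card = γ₁.card := by
      rw [← himA, Finset.card_image_of_injective _ ePair₁_inj]
    have hcardB : (γ.filter Q).card = γ₂.card := by
      rw [← himB, Finset.card_image_of_injective _ ePair₂_inj]
    -- cross sum bound
    have hcross : (C.card : ℝ) * c ^ 2 ≤ ∑ p ∈ C,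
        dist (Fin.append x₁ x₂ p.1) (Fin.append y₁ y₂ p.2) ^ 2 := by
      have hle : ∑ _p ∈ C, c ^ 2 ≤ ∑ p ∈ C,
          dist (Fin.append x₁ x₂ p.1) (Fin.append y₁ y₂ p.2) ^ 2 := by
        apply Finset.sum_le_sum
        intro p hp
        simp only [Finset.mem_filter, hC, hP, hQ] at hp
        have hd : c ≤ dist (Fin.append x₁ x₂ p.1) (Fin.append y₁ y₂ p.2) := by
          apply dist_ge_cross c x₁ x₂ y₁ y₂ hxx hxy hyx hyy
          omega
        nlinarith [dist_nonneg (x := Fin.append x₁ x₂ p.1) (y := Fin.append y₁ y₂ p.2)]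
      simpa [Finset.sum_const, nsmul_eq_mul] using hle
    unfold gospaCost
    rw [hsum, hsumA, hsumB, hcard, hcardA, hcardB]
    push_cast
    nlinarith [hcross]

end Aux

/-- GOSPA additivity for far-away components: if every point of `X₁ ∪ Y₁` is at
distance at least `c` from every point of `X₂ ∪ Y₂`, the squared GOSPA distance is additive. -/
theorem gospa2_additive_far {E : Type*} [MetricSpace E] {m₁ m₂ n₁ n₂ : ℕ} (c : ℝ) (hc : 0 < c)
    (x₁ : Fin m₁ → E) (x₂ : Fin m₂ → E) (y₁ : Fin n₁ → E) (y₂ : Fin n₂ → E)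
    (hxx : ∀ i j, c ≤ dist (x₁ i) (x₂ j))
    (hxy : ∀ i j, c ≤ dist (x₁ i) (y₂ j))
    (hyx : ∀ i j, c ≤ dist (y₁ i) (x₂ j))
    (hyy : ∀ i j, c ≤ dist (y₁ i) (y₂ j)) :
    gospa2 c (Fin.append x₁ x₂) (Fin.append y₁ y₂) = gospa2 c x₁ y₁ + gospa2 c x₂ y₂ := by
  apply le_antisymm
  · obtain ⟨γ₁, hv₁, he₁⟩ := gospa2_exists c x₁ y₁
    obtain ⟨γ₂, hv₂, he₂⟩ := gospa2_exists c x₂ y₂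
    obtain ⟨γ, hv, he⟩ := combine_cost c x₁ x₂ y₁ y₂ γ₁ γ₂ hv₁ hv₂
    rw [he₁, he₂, ← he]
    exact gospa2_le c _ _ γ hv
  · obtain ⟨γ, hv, he⟩ := gospa2_exists c (Fin.append x₁ x₂) (Fin.append y₁ y₂)
    obtain ⟨γ₁, γ₂, hv₁, hv₂, hle⟩ :=
      split_cost c hc x₁ x₂ y₁ y₂ hxx hxy hyx hyy γ hv
    rw [he]
    calc gospa2 c x₁ y₁ + gospa2 c x₂ y₂
        ≤ gospaCost c x₁ y₁ γ₁ + gospaCost c x₂ y₂ γ₂ :=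
          add_le_add (gospa2_le c _ _ γ₁ hv₁) (gospa2_le c _ _ γ₂ hv₂)
      _ ≤ _ := hle
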